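/- Let f : V → W be a linear map of finite-dimensional real inner product spaces and λ ≥ 0. Then F(f)(λ) equals the number of eigenvalues (counted with multiplicity) of f* ∘ f : V → V that are at most λ². -/

import Mathlib

open scoped RealInnerProductSpace

variable {V E : Type*}

noncomputable def c1 [Fintype E] [DecidableEq V] (v0 v1 : E → V) :
    EuclideanSpace ℝ E →ₗ[ℝ] EuclideanSpace ℝ V where
  toFun a := WithLp.toLp 2 fun v =>
    (∑ e ∈ Finset.univ.filter (fun e => v1 e = v), a e)
      - (∑ e ∈ Finset.univ.filter (fun e => v0 e = v), a e)
  map_add' a b := by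
    ext v
    simp [PiLp.add_apply, Finset.sum_add_distrib] <;>
    ring
  map_smul' c a := by
    ext v
    simp [PiLp.smul_apply, smul_eq_mul, ← Finset.mul_sum, mul_sub]

/-- Spectral density function of a linear map of inner product spaces. -/
noncomputable def sdf {V W : Type*} [NormedAddCommGroup V] [InnerProductSpace ℝ V]
    [NormedAddCommGroup W] [InnerProductSpace ℝ W]
    (f : V →ₗ[ℝ] W) (lam : ℝ) : ℕ :=
  sSup {n : ℕ | ∃ U : Submodule ℝ V, Module.finrank ℝ U = n ∧ ∀ v ∈ U, ‖f v‖ ≤ lam * ‖v‖}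

/-- Degree of a vertex in a finite directed multigraph (loops count twice). -/
def vdeg [Fintype E] [DecidableEq V] (v0 v1 : E → V) (v : V) : ℕ :=
  (Finset.univ.filter fun e => v0 e = v).card + (Finset.univ.filter fun e => v1 e = v).card

/-- Maximal vertex degree of a finite multigraph. -/
def maxDeg [Fintype V] [Fintype E] [DecidableEq V] (v0 v1 : E → V) : ℕ :=
  Finset.univ.sup (vdeg v0 v1)

/-- The simple graph underlying a directed multigraph. -/
def supportGraph (v0 v1 : E → V) : SimpleGraph V where
  Adj u w := u ≠ w ∧ ∃ e, (v0 e = u ∧ v1 e = w) ∨ (v0 e = w ∧ v1 e = u)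
  symm := by
    constructor
    rintro u w ⟨h, e, he⟩
    exact ⟨h.symm, e, he.symm⟩
  loopless := by constructor; rintro u ⟨h, _⟩; exact h rfl

/-!
Diagonalise the symmetric operator `T = f† ∘ f` in an orthonormal eigenbasis `bᵢ` with
eigenvalues `μᵢ`. For `λ ≥ 0` the condition `‖f v‖ ≤ λ ‖v‖` reads `⟪T v, v⟫ ≤ λ² ‖v‖²`, i.e.
`∑ (μᵢ - λ²) vᵢ² ≤ 0` in eigen-coordinates. It holds on the span of the `bᵢ` with `μᵢ ≤ λ²`,
which is the sum of the corresponding eigenspaces, while on the span of the remaining `bᵢ` the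
sum is positive away from `0`. A subspace on which the condition holds therefore meets that
complementary span trivially, so its dimension is at most the number of `μᵢ ≤ λ²`.
-/

open Module Submodule

namespace OrthonormalBasis

variable {ι : Type*} [Fintype ι] [NormedAddCommGroup V] [InnerProductSpace ℝ V]

theorem norm_sq_eq_sum_repr_sq (b : OrthonormalBasis ι ℝ V) (v : V) :
    ‖v‖ ^ 2 = ∑ i, b.repr v i ^ 2 := by
  simp_rw [b.repr_apply_apply, b.sum_sq_inner_right]

theorem mem_span_image_iff_repr_eq_zero (b : OrthonormalBasis ι ℝ V) (s : Set ι) (v : V) :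
    v ∈ span ℝ (b '' s) ↔ ∀ i ∉ s, b.repr v i = 0 := by
  rw [← b.coe_toBasis, Basis.mem_span_image, Finsupp.support_subset_iff]
  simp [b.coe_toBasis_repr_apply]

theorem finrank_span_image (b : OrthonormalBasis ι ℝ V) (s : Set ι) :
    finrank ℝ (span ℝ (b '' s)) = s.ncard := by
  classical
  rw [Set.image_eq_range, Set.ncard_eq_toFinset_card', Set.toFinset_card]
  exact finrank_span_eq_card (b.orthonormal.linearIndependent.comp _ Subtype.coe_injective)

end OrthonormalBasis

namespace LinearMap.IsSymmetric

variable [NormedAddCommGroup V] [InnerProductSpace ℝ V] [FiniteDimensional ℝ V]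
  {T : V →ₗ[ℝ] V} (hT : T.IsSymmetric) {n : ℕ} (hn : finrank ℝ V = n)

theorem inner_apply_self_sub_mul_norm_sq (c : ℝ) (v : V) :
    ⟪T v, v⟫ - c * ‖v‖ ^ 2 =
      ∑ i, (hT.eigenvalues hn i - c) * (hT.eigenvectorBasis hn).repr v i ^ 2 := by
  set b := hT.eigenvectorBasis hn
  rw [← b.repr.inner_map_map, b.norm_sq_eq_sum_repr_sq, Finset.mul_sum, PiLp.inner_apply,
    ← Finset.sum_sub_distrib]
  refine Finset.sum_congr rfl fun i _ => ?_
  simp only [b, hT.eigenvectorBasis_apply_self_apply hn, RCLike.inner_apply, conj_trivial,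
    RCLike.ofReal_real_eq_id, id_eq]
  ring

theorem iSup_eigenspace_le_eq_span_eigenvectorBasis (c : ℝ) :
    ⨆ μ : {μ : ℝ // μ ≤ c}, Module.End.eigenspace T μ =
      span ℝ (hT.eigenvectorBasis hn '' {i | hT.eigenvalues hn i ≤ c}) := by
  apply le_antisymm
  · refine iSup_le fun ⟨μ, hμ⟩ v hv => ?_
    rw [Module.End.mem_eigenspace_iff] at hv
    rw [OrthonormalBasis.mem_span_image_iff_repr_eq_zero]
    intro i hi
    have hcoord := hT.eigenvectorBasis_apply_self_apply hn v i
    rw [hv, map_smul, PiLp.smul_apply, smul_eq_mul] at hcoord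
    have hne : μ - hT.eigenvalues hn i ≠ 0 := by
      simp only [Set.mem_ofPred_eq, not_le] at hi
      linarith
    exact (mul_eq_zero.mp (by linear_combination hcoord)).resolve_left hne
  · rw [span_le]
    rintro _ ⟨i, hi, rfl⟩
    exact le_iSup (fun μ : {μ : ℝ // μ ≤ c} => Module.End.eigenspace T μ) ⟨_, hi⟩
      (hT.hasEigenvector_eigenvectorBasis hn i).1

theorem inner_le_of_mem_span_eigenvectorBasis {c : ℝ} {v : V}
    (hv : v ∈ span ℝ (hT.eigenvectorBasis hn '' {i | hT.eigenvalues hn i ≤ c})) :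
    ⟪T v, v⟫ ≤ c * ‖v‖ ^ 2 := by
  rw [← sub_nonpos, hT.inner_apply_self_sub_mul_norm_sq hn]
  rw [OrthonormalBasis.mem_span_image_iff_repr_eq_zero] at hv
  refine Finset.sum_nonpos fun i _ => ?_
  by_cases hi : hT.eigenvalues hn i ≤ c
  · exact mul_nonpos_of_nonpos_of_nonneg (sub_nonpos.2 hi) (sq_nonneg _)
  · simp [hv i hi]

theorem eq_zero_of_inner_le_of_mem_span_eigenvectorBasis {c : ℝ} {v : V}
    (hle : ⟪T v, v⟫ ≤ c * ‖v‖ ^ 2)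
    (hv : v ∈ span ℝ (hT.eigenvectorBasis hn '' {i | hT.eigenvalues hn i ≤ c}ᶜ)) : v = 0 := by
  set b := hT.eigenvectorBasis hn
  rw [← sub_nonpos, hT.inner_apply_self_sub_mul_norm_sq hn] at hle
  rw [OrthonormalBasis.mem_span_image_iff_repr_eq_zero] at hv
  simp only [Set.mem_compl_iff, Set.mem_ofPred_eq, not_not] at hv
  have hterm : ∀ i, 0 ≤ (hT.eigenvalues hn i - c) * b.repr v i ^ 2 := fun i => by
    by_cases hi : hT.eigenvalues hn i ≤ c
    · simp [b, hv i hi]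
    · exact mul_nonneg (by linarith) (sq_nonneg _)
  have hzero := (Finset.sum_eq_zero_iff_of_nonneg fun i _ => hterm i).1
    (le_antisymm hle (Finset.sum_nonneg fun i _ => hterm i))
  refine b.repr.injective (PiLp.ext fun i => ?_)
  by_cases hi : hT.eigenvalues hn i ≤ c
  · simp [b, hv i hi]
  · have hpos : hT.eigenvalues hn i - c ≠ 0 := by linarith
    simpa [hpos] using hzero i (Finset.mem_univ i)

include hT in
theorem isGreatest_finrank_inner_le (c : ℝ) :
    IsGreatest {k | ∃ U : Submodule ℝ V, finrank ℝ U = k ∧ ∀ v ∈ U, ⟪T v, v⟫ ≤ c * ‖v‖ ^ 2}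
      (finrank ℝ (⨆ μ : {μ : ℝ // μ ≤ c}, Module.End.eigenspace T μ : Submodule ℝ V)) := by
  rw [hT.iSup_eigenspace_le_eq_span_eigenvectorBasis rfl]
  set b := hT.eigenvectorBasis rfl
  set small := {i | hT.eigenvalues rfl i ≤ c}
  refine ⟨⟨_, rfl, fun v hv => hT.inner_le_of_mem_span_eigenvectorBasis rfl hv⟩, ?_⟩
  rintro _ ⟨U, rfl, hU⟩
  have hdisj : Disjoint U (span ℝ (b '' smallᶜ)) := disjoint_def.2 fun v hvU hv =>
    hT.eq_zero_of_inner_le_of_mem_span_eigenvectorBasis rfl (hU v hvU) hv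
  have hsum := finrank_add_finrank_le_of_disjoint hdisj
  have hcard := Set.ncard_add_ncard_compl small
  rw [b.finrank_span_image] at hsum ⊢
  rw [Nat.card_eq_fintype_card, Fintype.card_fin] at hcard
  omega

end LinearMap.IsSymmetric

theorem LinearMap.norm_apply_le_mul_norm_iff_inner_adjoint_comp_self_le
    [NormedAddCommGroup V] [InnerProductSpace ℝ V] [FiniteDimensional ℝ V]
    {W : Type*} [NormedAddCommGroup W] [InnerProductSpace ℝ W] [FiniteDimensional ℝ W]
    (f : V →ₗ[ℝ] W) {lam : ℝ} (hlam : 0 ≤ lam) (v : V) :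
    ‖f v‖ ≤ lam * ‖v‖ ↔ ⟪(adjoint f ∘ₗ f) v, v⟫ ≤ lam ^ 2 * ‖v‖ ^ 2 := by
  rw [comp_apply, adjoint_inner_left, real_inner_self_eq_norm_sq, ← mul_pow,
    pow_le_pow_iff_left₀ (norm_nonneg _) (by positivity) two_ne_zero]

/-- F(f)(λ) equals the number of eigenvalues (with multiplicity) of f* ∘ f that are ≤ λ²,
expressed as the dimension of the span of the corresponding eigenspaces. -/
theorem sdf_eq_eigenvalue_count {V W : Type*} [NormedAddCommGroup V] [InnerProductSpace ℝ V]
    [FiniteDimensional ℝ V] [NormedAddCommGroup W] [InnerProductSpace ℝ W]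
    [FiniteDimensional ℝ W] (f : V →ₗ[ℝ] W) (lam : ℝ) (hlam : 0 ≤ lam) :
    sdf f lam = Module.finrank ℝ
      ((⨆ mu : {mu : ℝ // mu ≤ lam ^ 2},
        Module.End.eigenspace (LinearMap.adjoint f ∘ₗ f) mu.1 : Submodule ℝ V)) := by
  simp_rw [sdf, f.norm_apply_le_mul_norm_iff_inner_adjoint_comp_self_le hlam]
  exact (f.isSymmetric_adjoint_comp_self.isGreatest_finrank_inner_le (lam ^ 2)).csSup_eq
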